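/- The subgraph Λ̃_1(n,k) of Λ_1(n,k) induced on the non-isolated codes C_1(n,k) \ I_1(n,k) is connected, and its diameter is at most k+1; that is, any two non-isolated codes of C_1(n,k) are joined in Λ_1(n,k) by a path of length at most k+1. -/

import Mathlib

open Finset

variable (F : Type) [Field F] [Fintype F] [DecidableEq F]

/-- The dual code of a linear code `C ⊆ F^n`, with respect to the standard bilinear form. -/
def dualCode (n : ℕ) (C : Submodule F (Fin n → F)) : Submodule F (Fin n → F) where
  carrier := {v | ∀ c ∈ C, ∑ i, v i * c i = 0}
  zero_mem' := by intro c _; simp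
  add_mem' := by
    intro a b ha hb c hc
    simp only [Set.mem_setOf_eq] at *
    simp [add_mul, Finset.sum_add_distrib, ha c hc, hb c hc]
  smul_mem' := by
    intro r a ha c hc
    simp only [Set.mem_setOf_eq] at *
    simp [smul_eq_mul, mul_assoc, ← Finset.mul_sum, ha c hc]

/-- `goodCode F n t k C` says that `C` is an `[n,k]`-linear code over `F` whose dual minimum
distance is at least `t+1`, i.e. `C ∈ C_t(n,k)`. -/
def goodCode (n t k : ℕ) (C : Submodule F (Fin n → F)) : Prop :=
  Module.finrank F C = k ∧ ∀ v ∈ dualCode F n C, v ≠ 0 → t + 1 ≤ hammingNorm v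

/-- The Grassmann graph `Δ_t(n,k)` of codes in `C_t(n,k)`: two codes are adjacent iff
their intersection has dimension `k-1`. -/
def deltaGraph (n t k : ℕ) : SimpleGraph {C : Submodule F (Fin n → F) // goodCode F n t k C} where
  Adj X Y := X ≠ Y ∧ Module.finrank F ↥(X.1 ⊓ Y.1) = k - 1
  symm := ⟨by
    rintro X Y ⟨h1, h2⟩
    exact ⟨h1.symm, by rwa [inf_comm]⟩⟩
  loopless := ⟨by rintro X ⟨h1, _⟩; exact h1 rfl⟩

/-- The graph `Λ_t(n,k)` of codes in `C_t(n,k)`: two codes are adjacent iff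
their intersection belongs to `C_t(n,k-1)`. -/
def lambdaGraph (n t k : ℕ) : SimpleGraph {C : Submodule F (Fin n → F) // goodCode F n t k C} where
  Adj X Y := X ≠ Y ∧ goodCode F n t (k-1) (X.1 ⊓ Y.1)
  symm := ⟨by
    rintro X Y ⟨h1, h2⟩
    exact ⟨h1.symm, by rwa [inf_comm]⟩⟩
  loopless := ⟨by rintro X ⟨h1, _⟩; exact h1 rfl⟩

/-- A code `C ∈ C_t(n,k)` is isolated if no `(k-1)`-dimensional subspace of `C`
belongs to `C_t(n,k-1)`. -/
def IsIsolated (n t k : ℕ) (C : Submodule F (Fin n → F)) : Prop :=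
  ∀ D : Submodule F (Fin n → F), D ≤ C → ¬ goodCode F n t (k-1) D

/-- A monomial transformation of `F^n`: a permutation of the coordinates composed with
multiplication of each coordinate by a nonzero scalar. -/
def IsMonomial (n : ℕ) (ρ : (Fin n → F) ≃ₗ[F] (Fin n → F)) : Prop :=
  ∃ (σ : Equiv.Perm (Fin n)) (d : Fin n → F),
    (∀ i, d i ≠ 0) ∧ ∀ (v : Fin n → F) (i : Fin n), ρ v i = d i * v (σ i)

/-- `S_s(Ω)`: the set of points (`1`-dimensional subspaces) of `PG(k-1,q)` lying on a subspace
spanned by `s+1` points of `Ω`. (We represent any subspace by the corresponding submodule of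
`F^k`, and points of `PG(k-1,q)` by `1`-dimensional submodules.) -/
def satPoints (k s : ℕ) (Ω : Set (Submodule F (Fin k → F))) : Set (Submodule F (Fin k → F)) :=
  {P | ∃ T : Finset (Submodule F (Fin k → F)), ↑T ⊆ Ω ∧ T.card = s + 1 ∧ P ≤ T.sup id}

/-- A set `Ω` of points of `PG(k-1,q)` is `s`-saturating if `S_s(Ω)` is the whole point set of
`PG(k-1,q)` while (for `s ≥ 1`) `S_{s-1}(Ω)` is not. -/
def IsSaturating (k s : ℕ) (Ω : Set (Submodule F (Fin k → F))) : Prop :=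
  (∀ P : Submodule F (Fin k → F), Module.finrank F P = 1 → P ∈ satPoints F k s Ω) ∧
  (1 ≤ s → ¬ ∀ P : Submodule F (Fin k → F), Module.finrank F P = 1 → P ∈ satPoints F k (s-1) Ω)

/-!
The dual-distance condition passes from a subcode to every larger code, since the dual code
shrinks; in particular every code containing the all-ones vector `1` is non-degenerate. A
non-isolated `X` contains a good hyperplane `D`, so `X` equals or is adjacent to `D ⊔ ⟨1⟩`. Two
codes `Z ≠ W` that share a good subcode `G` are joined in `k - dim (Z ⊓ W)` steps: replace `Z` by
`H ⊔ ⟨w⟩`, where `H ⊇ Z ⊓ W` is a hyperplane of `Z` and `w ∈ W \ Z`. Then `Z ⊓ (H ⊔ ⟨w⟩) = H ⊇ G`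
is good, and the intersection with `W` grows by one. With `G = ⟨1⟩`, which lies in both
intermediate codes, this gives a path of length `1 + (k - 1) + 1`.
-/

theorem Submodule.exists_le_le_finrank_eq {K V : Type*} [DivisionRing K] [AddCommGroup V]
    [Module K V] [FiniteDimensional K V] {S Z : Submodule K V} (hSZ : S ≤ Z) {m : ℕ}
    (hSm : Module.finrank K S ≤ m) (hmZ : m ≤ Module.finrank K Z) :
    ∃ H : Submodule K V, S ≤ H ∧ H ≤ Z ∧ Module.finrank K H = m := by
  induction m, hSm using Nat.le_induction with
  | base => exact ⟨S, le_rfl, hSZ, rfl⟩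
  | succ m _ ih =>
    obtain ⟨H, hSH, hHZ, hH⟩ := ih (by omega)
    obtain ⟨z, hzZ, hzH⟩ := SetLike.exists_of_lt (lt_of_le_of_ne hHZ (by rintro rfl; omega))
    exact ⟨H ⊔ K ∙ z, le_sup_of_le_left hSH,
      sup_le hHZ ((Submodule.span_singleton_le_iff_mem z Z).mpr hzZ),
      by rw [Submodule.finrank_sup_span_singleton hzH, hH]⟩

theorem Submodule.eq_of_finrank_le_finrank_inf {K V : Type*} [DivisionRing K] [AddCommGroup V]
    [Module K V] [FiniteDimensional K V] {Z W : Submodule K V}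
    (hZ : Module.finrank K Z ≤ Module.finrank K ↥(Z ⊓ W))
    (hW : Module.finrank K W ≤ Module.finrank K ↥(Z ⊓ W)) : Z = W :=
  (Submodule.eq_of_le_of_finrank_le inf_le_left hZ).symm.trans
    (Submodule.eq_of_le_of_finrank_le inf_le_right hW)

theorem Submodule.inf_sup_span_singleton_eq {K V : Type*} [DivisionRing K] [AddCommGroup V]
    [Module K V] {H Z : Submodule K V} {w : V} (hHZ : H ≤ Z) (hw : w ∉ Z) :
    Z ⊓ (H ⊔ K ∙ w) = H := by
  rw [inf_comm, sup_inf_assoc_of_le _ hHZ,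
    (Submodule.disjoint_span_singleton_of_notMem hw).symm.eq_bot, sup_bot_eq]

theorem sum_ne_zero_of_hammingNorm_eq_one {R ι : Type*} [AddCommMonoid R] [DecidableEq R]
    [Fintype ι] {v : ι → R} (hv : hammingNorm v = 1) : ∑ i, v i ≠ 0 := by
  obtain ⟨j, hsupp⟩ := Finset.card_eq_one.mp hv
  have hj : j ∈ ({i | v i ≠ 0} : Finset ι) := hsupp ▸ Finset.mem_singleton_self j
  rw [← Finset.sum_filter_ne_zero, hsupp, Finset.sum_singleton]
  exact (Finset.mem_filter.mp hj).2

abbrev nonIsolatedCodes (K : Type) [Field K] [DecidableEq K] (n t k : ℕ) :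
    Set {C : Submodule K (Fin n → K) // goodCode K n t k C} :=
  {X | ¬ IsIsolated K n t k X.1}

abbrev lambdaTildeGraph (K : Type) [Field K] [DecidableEq K] (n t k : ℕ) :
    SimpleGraph (nonIsolatedCodes K n t k) :=
  (lambdaGraph K n t k).induce (nonIsolatedCodes K n t k)

section

variable {K : Type} [Field K] {n t k : ℕ}

theorem dualCode_anti {D C : Submodule K (Fin n → K)} (hDC : D ≤ C) :
    dualCode K n C ≤ dualCode K n D :=
  fun _ hv c hc => hv c (hDC hc)

variable [DecidableEq K]

theorem goodCode_of_le {m : ℕ} {D C : Submodule K (Fin n → K)} (hD : goodCode K n t m D)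
    (hDC : D ≤ C) (hC : Module.finrank K C = k) : goodCode K n t k C :=
  ⟨hC, fun v hv hv0 => hD.2 v (dualCode_anti hDC hv) hv0⟩

theorem goodCode_span_one (hn : 0 < n) : goodCode K n 1 1 (K ∙ (1 : Fin n → K)) := by
  have : Nonempty (Fin n) := ⟨⟨0, hn⟩⟩
  refine ⟨finrank_span_singleton one_ne_zero, fun v hv hv0 => ?_⟩
  have hsum : ∑ i, v i = 0 := by simpa using hv 1 (Submodule.mem_span_singleton_self 1)
  by_contra! hlt
  have hpos := hammingNorm_pos_iff.mpr hv0
  exact sum_ne_zero_of_hammingNorm_eq_one (by omega) hsum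

theorem exists_lambdaTilde_adj_sup_span_singleton (hk : 1 ≤ k)
    (Z : nonIsolatedCodes K n t k)
    {H : Submodule K (Fin n → K)} (hHZ : H ≤ Z.1.1) (hH : goodCode K n t (k - 1) H)
    {w : Fin n → K} (hw : w ∉ Z.1.1) :
    ∃ Z', Z'.1.1 = H ⊔ K ∙ w ∧ (lambdaTildeGraph K n t k).Adj Z Z' := by
  have hgood : goodCode K n t k (H ⊔ K ∙ w) := goodCode_of_le hH le_sup_left (by
    rw [Submodule.finrank_sup_span_singleton fun h => hw (hHZ h), hH.1]; omega)
  refine ⟨⟨⟨_, hgood⟩, fun hiso => hiso H le_sup_left hH⟩, rfl, ?_, ?_⟩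
  · intro h
    exact hw (congrArg Subtype.val h ▸
      Submodule.mem_sup_right (Submodule.mem_span_singleton_self w))
  · change goodCode K n t (k - 1) (Z.1.1 ⊓ (H ⊔ K ∙ w))
    rwa [Submodule.inf_sup_span_singleton_eq hHZ hw]

theorem nonIsolatedCodes_eq_of_le_finrank_inf {Z W : nonIsolatedCodes K n t k}
    (h : k ≤ Module.finrank K ↥(Z.1.1 ⊓ W.1.1)) : Z = W :=
  Subtype.ext <| Subtype.ext <| Submodule.eq_of_finrank_le_finrank_inf
    (by rwa [Z.1.2.1]) (by rwa [W.1.2.1])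

theorem exists_lambdaTilde_walk_of_le_of_le (hk : 1 ≤ k) {m : ℕ} {G : Submodule K (Fin n → K)}
    (hG : goodCode K n t m G) (d : ℕ) :
    ∀ Z W : nonIsolatedCodes K n t k, G ≤ Z.1.1 → G ≤ W.1.1 →
      k ≤ Module.finrank K ↥(Z.1.1 ⊓ W.1.1) + d →
      ∃ p : (lambdaTildeGraph K n t k).Walk Z W, p.length ≤ d := by
  induction d with
  | zero =>
    intro Z W _ _ hd
    obtain rfl := nonIsolatedCodes_eq_of_le_finrank_inf hd
    exact ⟨.nil, le_rfl⟩
  | succ d ih =>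
    intro Z W hGZ hGW hd
    by_cases hfr : k ≤ Module.finrank K ↥(Z.1.1 ⊓ W.1.1)
    · obtain rfl := nonIsolatedCodes_eq_of_le_finrank_inf hfr
      exact ⟨.nil, Nat.zero_le _⟩
    obtain ⟨w, hwW, hwZ⟩ := SetLike.not_le_iff_exists.mp fun hWZ : W.1.1 ≤ Z.1.1 => by
      rw [inf_eq_right.mpr hWZ, W.1.2.1] at hfr; omega
    obtain ⟨H, hH_inf, hHZ, hH⟩ :=
      Submodule.exists_le_le_finrank_eq (inf_le_left : Z.1.1 ⊓ W.1.1 ≤ Z.1.1) (m := k - 1)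
        (by omega) (by rw [Z.1.2.1]; omega)
    have hGH : G ≤ H := (le_inf hGZ hGW).trans hH_inf
    obtain ⟨Z', hZ', hadj⟩ :=
      exists_lambdaTilde_adj_sup_span_singleton hk Z hHZ (goodCode_of_le hG hGH hH) hwZ
    have hclose : (Z.1.1 ⊓ W.1.1) ⊔ K ∙ w ≤ Z'.1.1 ⊓ W.1.1 := by
      rw [hZ']
      exact le_inf (sup_le_sup_right hH_inf _)
        (sup_le inf_le_right ((Submodule.span_singleton_le_iff_mem _ _).mpr hwW))
    obtain ⟨p, hp⟩ := ih Z' W (hZ' ▸ hGH.trans le_sup_left) hGW (by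
      have := Submodule.finrank_mono hclose
      rw [Submodule.finrank_sup_span_singleton fun h => hwZ (Submodule.mem_inf.mp h).1] at this
      omega)
    exact ⟨.cons hadj p, by rw [SimpleGraph.Walk.length_cons]; omega⟩

theorem exists_lambdaTilde_walk_le_one_to_mem (hk : 1 ≤ k) (u : Fin n → K)
    (X : nonIsolatedCodes K n t k) :
    ∃ Z : nonIsolatedCodes K n t k, u ∈ Z.1.1 ∧
      ∃ p : (lambdaTildeGraph K n t k).Walk X Z, p.length ≤ 1 := by
  by_cases hu : u ∈ X.1.1
  · exact ⟨X, hu, .nil, zero_le_one⟩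
  obtain ⟨D, hDX, hD⟩ : ∃ D ≤ X.1.1, goodCode K n t (k - 1) D := by
    by_contra! h
    exact X.2 h
  obtain ⟨Z, hZ, hadj⟩ := exists_lambdaTilde_adj_sup_span_singleton hk X hDX hD hu
  exact ⟨Z, hZ ▸ Submodule.mem_sup_right (Submodule.mem_span_singleton_self u),
    hadj.toWalk, le_rfl⟩

theorem exists_lambdaTilde_walk_length_le (hk : 1 ≤ k) {u : Fin n → K}
    (hu : goodCode K n t 1 (K ∙ u)) (X Y : nonIsolatedCodes K n t k) :
    ∃ p : (lambdaTildeGraph K n t k).Walk X Y, p.length ≤ k + 1 := by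
  obtain ⟨ZX, huX, pX, hpX⟩ := exists_lambdaTilde_walk_le_one_to_mem hk u X
  obtain ⟨ZY, huY, pY, hpY⟩ := exists_lambdaTilde_walk_le_one_to_mem hk u Y
  have hspan : K ∙ u ≤ ZX.1.1 ⊓ ZY.1.1 :=
    (Submodule.span_singleton_le_iff_mem _ _).mpr ⟨huX, huY⟩
  obtain ⟨q, hq⟩ := exists_lambdaTilde_walk_of_le_of_le hk hu (k - 1) ZX ZY
    (hspan.trans inf_le_left) (hspan.trans inf_le_right) (by
      have := Submodule.finrank_mono hspan
      rw [hu.1] at this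
      omega)
  refine ⟨pX.append (q.append pY.reverse), ?_⟩
  simp only [SimpleGraph.Walk.length_append, SimpleGraph.Walk.length_reverse]
  omega

end

/-- The induced subgraph `Λ̃_1(n,k)` on the non-isolated codes of `C_1(n,k)`
is connected, and any two non-isolated codes are joined in `Λ_1(n,k)` by a path of length
at most `k+1`. -/
theorem lambdaTilde_one_connected_diam_le
    {n k : ℕ} (hk : 1 < k) (hkn : k < n) :
    ((lambdaGraph F n 1 k).induce
        {X : {C : Submodule F (Fin n → F) // goodCode F n 1 k C} |
          ¬ IsIsolated F n 1 k X.1}).Preconnected ∧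
    ∀ X Y : {C : Submodule F (Fin n → F) // goodCode F n 1 k C},
      ¬ IsIsolated F n 1 k X.1 → ¬ IsIsolated F n 1 k Y.1 →
      (lambdaGraph F n 1 k).Reachable X Y ∧ (lambdaGraph F n 1 k).dist X Y ≤ k + 1 := by
  have hwalk := exists_lambdaTilde_walk_length_le (k := k) (by omega)
    (goodCode_span_one (K := F) (n := n) (by omega))
  refine ⟨fun X Y => (hwalk X Y).elim fun p _ => p.reachable, fun X Y hX hY => ?_⟩
  obtain ⟨p, hp⟩ := hwalk ⟨X, hX⟩ ⟨Y, hY⟩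
  let q := p.map (SimpleGraph.Embedding.induce _).toHom
  exact ⟨q.reachable,
    (SimpleGraph.dist_le q).trans ((SimpleGraph.Walk.length_map _ p).trans_le hp)⟩
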